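/- Let G be a group and X ⊆ A^G a subshift such that the set of points with finite G-orbit is dense in X. Then Aut(X) is residually finite. -/

import Mathlib

/-!
Every automorphism commutes with the shift, so for a subgroup `H` of finite index it permutes the
set `Stab_H(X)` of `H`-periodic points, which is finite because such a point is constant on the
finitely many cosets of `H`. Restriction gives a homomorphism from `Aut(X)` to a finite group.
An automorphism `φ ≠ 1` moves the points of a nonempty open set, which by density contains a
point `y` with finite orbit; then `φ` survives restriction to `Stab_H(X)` for `H` the stabilizer
of `y`.
-/

/-- The (left) shift action on configurations: `(shift g x) h = x (g⁻¹ * h)`. -/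
def shift {G A : Type*} [Group G] (g : G) (x : G → A) : G → A := fun h => x (g⁻¹ * h)

/-- A subshift: a closed, shift-invariant subset of the full shift `A^G`. -/
def IsSubshift {G A : Type*} [Group G] [TopologicalSpace A] (X : Set (G → A)) : Prop :=
  IsClosed X ∧ ∀ g : G, ∀ x ∈ X, shift g x ∈ X

/-- `X` is strongly irreducible with constant `K`: whenever `S * K ∩ T = ∅`, any two
patterns of `X` with supports `S` and `T` can be jointly realized in `X`. -/
def StronglyIrreducible {G A : Type*} [Group G] (X : Set (G → A)) (K : Finset G) : Prop :=
  ∀ S T : Finset G, (∀ s ∈ S, ∀ k ∈ K, s * k ∉ T) →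
    ∀ x ∈ X, ∀ y ∈ X, ∃ z ∈ X, (∀ g ∈ S, z g = x g) ∧ (∀ g ∈ T, z g = y g)

/-- The shift action on a shift-invariant subset, as a map `X → X`. -/
def shiftX {G A : Type*} [Group G] (X : Set (G → A))
    (hX : ∀ g : G, ∀ x ∈ X, shift g x ∈ X) (g : G) (x : X) : X :=
  ⟨shift g (x : G → A), hX g x x.2⟩

/-- The automorphism group of a subshift `X`: shift-commuting self-homeomorphisms of `X`,
as a subgroup of the permutation group of `X`. -/
def Aut {G A : Type*} [Group G] [TopologicalSpace A] (X : Set (G → A))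
    (hX : ∀ g : G, ∀ x ∈ X, shift g x ∈ X) : Subgroup (Equiv.Perm X) where
  carrier := {φ | Continuous φ ∧ Continuous φ.symm ∧
    ∀ (g : G) (x : X), φ (shiftX X hX g x) = shiftX X hX g (φ x)}
  one_mem' := by
    refine ⟨?_, ?_, fun g x => rfl⟩
    · simpa using continuous_id
    · exact continuous_id
  mul_mem' := by
    rintro a b ⟨ha1, ha2, ha3⟩ ⟨hb1, hb2, hb3⟩
    refine ⟨?_, ?_, fun g x => ?_⟩
    · have : ⇑(a * b) = ⇑a ∘ ⇑b := rfl
      rw [this]; exact ha1.comp hb1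
    · have : ⇑(a * b).symm = ⇑b.symm ∘ ⇑a.symm := rfl
      rw [this]; exact hb2.comp ha2
    · have h1 : (a * b) (shiftX X hX g x) = a (b (shiftX X hX g x)) := rfl
      have h2 : (a * b) x = a (b x) := rfl
      rw [h1, h2, hb3, ha3]
  inv_mem' := by
    rintro a ⟨h1, h2, h3⟩
    refine ⟨?_, ?_, fun g x => ?_⟩
    · have : ⇑(a⁻¹) = ⇑a.symm := rfl
      rw [this]; exact h2
    · have : ⇑(a⁻¹).symm = ⇑a := rfl
      rw [this]; exact h1
    · apply a.injective
      rw [h3]; simp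

/-- A group is residually finite if every non-identity element avoids some normal
subgroup of finite index. -/
def ResiduallyFinite (M : Type*) [Group M] : Prop :=
  ∀ m : M, m ≠ 1 → ∃ N : Subgroup M, N.Normal ∧ N.FiniteIndex ∧ m ∉ N

open MulAction

theorem shift_one {G A : Type*} [Group G] (x : G → A) : shift (1 : G) x = x := by
  funext h; simp [shift]

theorem shift_mul {G A : Type*} [Group G] (g g' : G) (x : G → A) :
    shift (g * g') x = shift g (shift g' x) := by
  funext h; simp [shift, mul_assoc]

abbrev shiftMulAction {G A : Type*} [Group G] : MulAction G (G → A) where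
  smul := shift
  one_smul := shift_one
  mul_smul := shift_mul

attribute [local instance] shiftMulAction

theorem smul_eq_shift {G A : Type*} [Group G] (g : G) (x : G → A) : g • x = shift g x :=
  rfl

theorem ResiduallyFinite.of_forall_exists_monoidHom {M : Type*} [Group M]
    (h : ∀ m : M, m ≠ 1 →
      ∃ (F : Type*) (_ : Group F) (_ : Finite F) (f : M →* F), f m ≠ 1) :
    ResiduallyFinite M := by
  intro m hm
  obtain ⟨F, _, _, f, hfm⟩ := h m hm
  exact ⟨f.ker, f.normal_ker, Subgroup.finiteIndex_ker f, hfm⟩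

section FullShift

variable {G A : Type*} [Group G]

theorem finiteIndex_stabilizer_of_finite_orbit {y : G → A} (hy : (orbit G y).Finite) :
    (stabilizer G y).FiniteIndex :=
  have : Finite (orbit G y) := hy.to_subtype
  have : Finite (G ⧸ stabilizer G y) := .of_equiv _ (orbitEquivQuotientStabilizer G y)
  Subgroup.finiteIndex_of_finite_quotient

-- A configuration `z` fixed by `H` is constant on right cosets `H * k`, hence determined by
-- `k H ↦ z k⁻¹`.
theorem finite_fixedPoints [Finite A] (H : Subgroup G) [H.FiniteIndex] :
    (fixedPoints H (G → A)).Finite := by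
  let onCosets (z : fixedPoints H (G → A)) : G ⧸ H → A :=
    Quotient.lift (fun k => (z : G → A) k⁻¹) fun a b hab => by
      have hfix : (a⁻¹ * b) • (z : G → A) = z :=
        z.2 ⟨_, QuotientGroup.leftRel_apply.mp hab⟩
      simpa [smul_eq_shift, shift, mul_assoc] using (congrFun hfix a⁻¹).symm
  refine Set.finite_coe_iff.mp (Finite.of_injective onCosets fun z z' hzz' => ?_)
  ext g
  simpa [onCosets] using congrFun hzz' (g⁻¹ : G)

end FullShift

section Subshift

variable {G A : Type*} [Group G] [TopologicalSpace A] (X : Set (G → A))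
  (hX : ∀ g : G, ∀ x ∈ X, shift g x ∈ X)

-- The paper's `Stab_H(X)`.
def periodicPoints (H : Subgroup G) : SubMulAction (Aut X hX) X where
  carrier := {z | (z : G → A) ∈ fixedPoints H (G → A)}
  smul_mem' φ z hz h := by
    have hz' : shiftX X hX h z = z := Subtype.ext (hz h)
    exact congrArg Subtype.val ((φ.2.2.2 h z).symm.trans (congrArg (⇑(φ : Equiv.Perm X)) hz'))

theorem finite_periodicPoints [Finite A] (H : Subgroup G) [H.FiniteIndex] :
    Finite (periodicPoints X hX H) :=
  have : Finite (fixedPoints H (G → A)) := (finite_fixedPoints H).to_subtype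
  .of_injective (fun z => (⟨z.1.1, z.2⟩ : fixedPoints H (G → A)))
    fun _ _ h => by ext : 2; exact congrArg (fun w : fixedPoints H (G → A) => (w : G → A)) h

theorem dense_setOf_finite_orbit
    (hdense : ∀ x ∈ X, ∀ U : Set (G → A), IsOpen U → x ∈ U →
      ∃ y ∈ X ∩ U, (Set.range fun g : G => shift g y).Finite) :
    Dense {z : X | (orbit G (z : G → A)).Finite} := by
  refine dense_iff_inter_open.mpr fun V hV ⟨x, hxV⟩ => ?_
  obtain ⟨U, hU, rfl⟩ := isOpen_induced_iff.mp hV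
  obtain ⟨y, ⟨hyX, hyU⟩, hy⟩ := hdense x x.2 U hU hxV
  exact ⟨⟨y, hyX⟩, hyU, hy⟩

end Subshift

/-- if the points of `X` with finite orbit are dense in `X`, then `Aut(X)`
is residually finite. -/
theorem stmt8 {G A : Type*} [Group G] [Fintype A] [TopologicalSpace A] [DiscreteTopology A]
    (X : Set (G → A)) (hX : IsSubshift X)
    (hdense : ∀ x ∈ X, ∀ U : Set (G → A), IsOpen U → x ∈ U →
      ∃ y ∈ X ∩ U, (Set.range fun g : G => shift g y).Finite) :
    ResiduallyFinite (Aut X hX.2) := by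
  refine ResiduallyFinite.of_forall_exists_monoidHom fun φ hφ => ?_
  obtain ⟨x, hx⟩ : ∃ x, (φ : Equiv.Perm X) x ≠ x := by
    by_contra! h
    exact hφ (Subtype.ext (Equiv.ext h))
  obtain ⟨y, hy_moved, hy_finite⟩ := (dense_setOf_finite_orbit X hdense).inter_open_nonempty _
    (isOpen_ne_fun φ.2.1 continuous_id) ⟨x, hx⟩
  let P := periodicPoints X hX.2 (stabilizer G (y : G → A))
  have := finiteIndex_stabilizer_of_finite_orbit hy_finite
  have : Finite P := finite_periodicPoints X hX.2 _
  refine ⟨Equiv.Perm P, inferInstance, inferInstance, toPermHom (Aut X hX.2) P, fun h => ?_⟩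
  exact hy_moved (congrArg Subtype.val (Equiv.ext_iff.mp h ⟨y, fun g => g.2⟩))
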